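/- With w_i = exp((2y_i − 1)/(2σ²)), the log-likelihood ratio for BIS satisfies log(P(y)/Q(y)) ≤ k · log((1/T) Σ_{i=1}^T w_i). -/

import Mathlib

/-!
The normalized likelihood ratio is the normalized elementary symmetric mean
`e_k(w) / C(T, k)`, and Maclaurin's inequality bounds it by the `k`-th power of the arithmetic
mean of the `w i`; taking logarithms gives the bound. Maclaurin's inequality in this form is
proved by induction on the number of variables: adjoining one variable `t` to `m` variables of
mean `a` turns the bound into the convexity of `x ↦ x ^ (j + 1)`, i.e. Bernoulli's inequality
for the tangent line at `a` evaluated at the new mean `(m a + t) / (m + 1)`.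
-/

section Maclaurin

variable {K : Type*} [Field K] [LinearOrder K] [IsStrictOrderedRing K]

theorem choose_mul_pow_add_le_choose_succ_mul_pow {a t : K} (ha : 0 ≤ a) (ht : 0 ≤ t)
    (m j : ℕ) :
    m.choose (j + 1) * a ^ (j + 1) + t * (m.choose j * a ^ j)
      ≤ (m + 1).choose (j + 1) * ((m * a + t) / (m + 1)) ^ (j + 1) := by
  set X := (m * a + t) / (m + 1) with hX
  have hX0 : 0 ≤ X := by positivity
  have bernoulli : a ^ (j + 1) + (j + 1 : ℕ) * a ^ j * (X - a) ≤ X ^ (j + 1) := by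
    simpa using pow_add_mul_le_add_pow ha (b := X - a) (by linarith) (j + 1)
  have pascal : ((m + 1).choose (j + 1) : K) = m.choose j + m.choose (j + 1) := by
    exact_mod_cast Nat.choose_succ_succ' m j
  have absorb : ((m + 1).choose (j + 1) * (j + 1 : ℕ) : K) = (m + 1) * m.choose j := by
    exact_mod_cast (Nat.add_one_mul_choose_eq m j).symm
  have hXa : X - a = (t - a) / (m + 1) := by
    rw [hX]; field_simp; ring
  -- Pascal's rule and `(j + 1) C(m + 1, j + 1) = (m + 1) C(m, j)` make the left side
  -- `C(m + 1, j + 1)` times the tangent line of `x ^ (j + 1)` at `a`, evaluated at `X`.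
  calc m.choose (j + 1) * a ^ (j + 1) + t * (m.choose j * a ^ j)
      = (m + 1).choose (j + 1) * (a ^ (j + 1) + (j + 1 : ℕ) * a ^ j * (X - a)) := by
        have hslope : ((m + 1).choose (j + 1) * (j + 1 : ℕ) : K) * ((t - a) / (m + 1))
            = m.choose j * (t - a) := by
          rw [absorb]; field_simp
        rw [hXa]
        linear_combination (-a ^ (j + 1)) * pascal - a ^ j * hslope
    _ ≤ (m + 1).choose (j + 1) * X ^ (j + 1) := by gcongr

namespace Multiset

theorem esymm_cons_succ {R : Type*} [CommSemiring R] (a : R) (s : Multiset R) (n : ℕ) :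
    (a ::ₘ s).esymm (n + 1) = s.esymm (n + 1) + a * s.esymm n := by
  simp only [esymm, powersetCard_cons, map_add, sum_add, map_map, Function.comp_def, prod_cons,
    sum_map_mul_left]

theorem esymm_le_choose_mul_sum_div_card_pow {s : Multiset K} (hs : ∀ x ∈ s, 0 ≤ x) (k : ℕ) :
    s.esymm k ≤ (card s).choose k * (s.sum / card s) ^ k := by
  induction s using Multiset.induction_on generalizing k with
  | empty => cases k <;> simp [esymm, powersetCard_zero_right]
  | cons a s ih =>
    have ha : 0 ≤ a := hs a (mem_cons_self a s)
    have ih := fun k => ih (fun x hx => hs x (mem_cons_of_mem hx)) k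
    cases k with
    | zero => simp [esymm]
    | succ j =>
      set μ := s.sum / card s
      have hμ : 0 ≤ μ := div_nonneg (sum_nonneg fun x hx => hs x (mem_cons_of_mem hx)) (by simp)
      have hsum : s.sum = card s * μ := by
        rcases eq_or_ne s 0 with rfl | hs0
        · simp
        · rw [mul_div_cancel₀ _ (by simpa using hs0)]
      calc (a ::ₘ s).esymm (j + 1) = s.esymm (j + 1) + a * s.esymm j := esymm_cons_succ a s j
        _ ≤ (card s).choose (j + 1) * μ ^ (j + 1) + a * ((card s).choose j * μ ^ j) := by
          gcongr <;> exact ih _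
        _ ≤ (card s + 1).choose (j + 1) * ((card s * μ + a) / (card s + 1)) ^ (j + 1) :=
          choose_mul_pow_add_le_choose_succ_mul_pow hμ ha _ _
        _ = _ := by rw [card_cons, sum_cons, hsum, add_comm a]; push_cast; rfl

end Multiset

end Maclaurin

theorem bis_screening_bound_general (T k : ℕ) (hk : k ≤ T)
    (σ : ℝ) (y : Fin T → ℝ) (w : Fin T → ℝ)
    (hw : w = fun i => Real.exp ((2 * y i - 1) / (2 * σ ^ 2))) :
    Real.log ((1 / (T.choose k : ℝ)) *
        ∑ S ∈ (Finset.univ : Finset (Fin T)).powersetCard k, ∏ i ∈ S, w i)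
      ≤ (k : ℝ) * Real.log ((1 / (T : ℝ)) * ∑ i, w i) := by
  have hw_pos : ∀ i, 0 < w i := by simp [hw, Real.exp_pos]
  have hchoose : (0 : ℝ) < T.choose k := by exact_mod_cast Nat.choose_pos hk
  have hesymm_pos : 0 < ∑ S ∈ (Finset.univ : Finset (Fin T)).powersetCard k, ∏ i ∈ S, w i :=
    Finset.sum_pos (fun S _ => Finset.prod_pos fun i _ => hw_pos i)
      (Finset.powersetCard_nonempty.mpr (by simpa using hk))
  have maclaurin := (Finset.univ.val.map w).esymm_le_choose_mul_sum_div_card_pow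
    (by simpa using fun i => (hw_pos i).le) k
  rw [Finset.esymm_map_val] at maclaurin
  simp only [Multiset.card_map, Finset.card_val, Finset.card_univ, Fintype.card_fin] at maclaurin
  have hmean : (1 / (T.choose k : ℝ)) *
      ∑ S ∈ (Finset.univ : Finset (Fin T)).powersetCard k, ∏ i ∈ S, w i
        ≤ ((1 / (T : ℝ)) * ∑ i, w i) ^ k := by
    rw [one_div_mul_eq_div, div_le_iff₀ hchoose, one_div_mul_eq_div, mul_comm]
    exact maclaurin
  calc _ ≤ Real.log (((1 / (T : ℝ)) * ∑ i, w i) ^ k) := Real.log_le_log (by positivity) hmean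
    _ = _ := Real.log_pow _ _

/-- Fast screening bound: the BIS log-likelihood ratio is at most
`k · log((1/T) Σᵢ wᵢ)` with `wᵢ = exp((2yᵢ−1)/(2σ²))`. -/
theorem bis_screening_bound (T k : ℕ) (hT : 0 < T) (hk : k ≤ T)
    (σ : ℝ) (hσ : 0 < σ) (y : Fin T → ℝ) (w : Fin T → ℝ)
    (hw : w = fun i => Real.exp ((2 * y i - 1) / (2 * σ ^ 2))) :
    Real.log ((1 / (T.choose k : ℝ)) *
        ∑ S ∈ (Finset.univ : Finset (Fin T)).powersetCard k, ∏ i ∈ S, w i)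
      ≤ (k : ℝ) * Real.log ((1 / (T : ℝ)) * ∑ i, w i) :=
  bis_screening_bound_general T k hk σ y w hw
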